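/- Let a, b ∈ R have WD inverses a', b' respectively with common index k. If ab = ba and b'ba = ab'b, then a'b' is a WD inverse of ab with index k. -/

import Mathlib

/-! The products split: since `ab = ba`, `(ab)^n = a^n b^n`, and the hypothesis `b'b a = a b'b`
lets `b'` pass through `ab` as `b'(ab) = a(b'b)`. Each defining identity for `a'b'` then reduces to
the corresponding identities for `a'` and `b'`. -/

structure IsWDInverse {M : Type*} [Monoid M] (a x : M) (k : ℕ) : Prop where
  mul_mul_self : a * x * a = a
  pow_succ_mul : a ^ (k + 1) * x = a ^ k
  mul_pow_succ : x * a ^ (k + 1) = a ^ k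

section WDInverse

variable {M : Type*} [Monoid M] {a b a' b' : M} {k : ℕ}

theorem mul_mul_eq_of_commute (hab : Commute a b) (hc : Commute (b' * b) a) :
    b' * (a * b) = a * (b' * b) := by
  rw [hab.eq, ← mul_assoc, hc.eq]

theorem mul_mul_mul_mul_self_of_commute (hab : Commute a b) (hc : Commute (b' * b) a)
    (ha : a * a' * a = a) (hb : b * b' * b = b) :
    a * b * (a' * b') * (a * b) = a * b := by
  have hbaa : a * b * a' * a = b * a := by
    rw [hab.eq, mul_assoc b, mul_assoc b, ha]
  calc a * b * (a' * b') * (a * b) = a * b * a' * (b' * (a * b)) := by simp only [mul_assoc]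
    _ = a * b * a' * a * (b' * b) := by rw [mul_mul_eq_of_commute hab hc]; simp only [mul_assoc]
    _ = a * (b * b' * b) := by rw [hbaa, ← hab.eq]; simp only [mul_assoc]
    _ = a * b := by rw [hb]

theorem mul_pow_succ_mul_of_commute (hab : Commute a b)
    (ha : a ^ (k + 1) * a' = a ^ k) (hb : b ^ (k + 1) * b' = b ^ k) :
    (a * b) ^ (k + 1) * (a' * b') = (a * b) ^ k :=
  calc (a * b) ^ (k + 1) * (a' * b') = b ^ (k + 1) * (a ^ (k + 1) * a') * b' := by
        rw [hab.mul_pow, (hab.pow_pow _ _).eq]; simp only [mul_assoc]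
    _ = a ^ k * (b ^ (k + 1) * b') := by rw [ha, ← (hab.pow_pow k (k + 1)).eq, mul_assoc]
    _ = (a * b) ^ k := by rw [hb, hab.mul_pow]

theorem mul_mul_pow_succ_of_commute (hab : Commute a b) (hc : Commute (b' * b) a)
    (ha : a' * a ^ (k + 1) = a ^ k) (hb : b' * b ^ (k + 1) = b ^ k) :
    a' * b' * (a * b) ^ (k + 1) = (a * b) ^ k :=
  calc a' * b' * (a * b) ^ (k + 1) = a' * (b' * (a * b)) * (a ^ k * b ^ k) := by
        rw [pow_succ', hab.mul_pow]; simp only [mul_assoc]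
    _ = a' * (a * (b' * b * a ^ k) * b ^ k) := by
        rw [mul_mul_eq_of_commute hab hc]; simp only [mul_assoc]
    _ = a' * a ^ (k + 1) * (b' * b ^ (k + 1)) := by
        rw [(hc.pow_right k).eq, pow_succ', pow_succ']; simp only [mul_assoc]
    _ = (a * b) ^ k := by rw [ha, hb, hab.mul_pow]

theorem IsWDInverse.mul (ha : IsWDInverse a a' k) (hb : IsWDInverse b b' k)
    (hab : Commute a b) (hc : Commute (b' * b) a) : IsWDInverse (a * b) (a' * b') k where
  mul_mul_self := mul_mul_mul_mul_self_of_commute hab hc ha.mul_mul_self hb.mul_mul_self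
  pow_succ_mul := mul_pow_succ_mul_of_commute hab ha.pow_succ_mul hb.pow_succ_mul
  mul_pow_succ := mul_mul_pow_succ_of_commute hab hc ha.mul_pow_succ hb.mul_pow_succ

end WDInverse

theorem WD_forward_order_general {R : Type*} [Ring R] (a b a' b' : R) (k : ℕ)
    (ha1 : a * a' * a = a) (ha2 : a ^ (k + 1) * a' = a ^ k) (ha3 : a' * a ^ (k + 1) = a ^ k)
    (hb1 : b * b' * b = b) (hb2 : b ^ (k + 1) * b' = b ^ k) (hb3 : b' * b ^ (k + 1) = b ^ k)
    (hcomm : a * b = b * a) (hc : b' * b * a = a * (b' * b)) :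
    a * b * (a' * b') * (a * b) = a * b ∧ (a * b) ^ (k + 1) * (a' * b') = (a * b) ^ k ∧ (a' * b') * (a * b) ^ (k + 1) = (a * b) ^ k := by
  obtain ⟨h1, h2, h3⟩ := IsWDInverse.mul ⟨ha1, ha2, ha3⟩ ⟨hb1, hb2, hb3⟩ hcomm hc
  exact ⟨h1, h2, h3⟩

theorem WD_forward_order {R : Type*} [Ring R] (a b a' b' : R) (k : ℕ) (hk : 0 < k)
    (ha1 : a * a' * a = a) (ha2 : a ^ (k + 1) * a' = a ^ k) (ha3 : a' * a ^ (k + 1) = a ^ k)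
    (hb1 : b * b' * b = b) (hb2 : b ^ (k + 1) * b' = b ^ k) (hb3 : b' * b ^ (k + 1) = b ^ k)
    (hcomm : a * b = b * a) (hc : b' * b * a = a * (b' * b)) :
    a * b * (a' * b') * (a * b) = a * b ∧ (a * b) ^ (k + 1) * (a' * b') = (a * b) ^ k ∧ (a' * b') * (a * b) ^ (k + 1) = (a * b) ^ k :=
  WD_forward_order_general a b a' b' k ha1 ha2 ha3 hb1 hb2 hb3 hcomm hc
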